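/- Let X₀ be a sum of N₀ i.i.d. Rademacher random variables, and let X̂₁, X̂₂ be two independent sums of N̂ i.i.d. Rademacher random variables each, all independent of X₀. Set Xᵢ = X₀ + X̂ᵢ for i = 1,2. Then for every β ≥ 0, P(X₁ ≥ β and X₂ ≥ β) ≤ 3(N₀ + N̂)·exp(-γ²/(1+ρ)), where γ = β/√(N₀ + N̂) and ρ = N₀/(N̂ + N₀). -/

import Mathlib

open MeasureTheory ProbabilityTheory Real

/-!
Adding the two inequalities, `X₁ ≥ β ∧ X₂ ≥ β` forces `2 X₀ + X̂₁ + X̂₂ ≥ 2β`. The left side is a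
weighted sum of independent Rademacher variables (weight `2` on the `N₀` shared ones, `1` on the
`2 N̂` others), so Hoeffding's inequality bounds the probability by
`exp (-(2β)² / (2 (4 N₀ + 2 N̂))) = exp (-β² / (2 N₀ + N̂)) = exp (-γ² / (1 + ρ))`,
which is even sharper than the claim since `3 (N₀ + N̂) ≥ 1`.
-/

section

variable {Ω : Type*} [MeasurableSpace Ω]

def IsRademacher (X : Ω → ℝ) (μ : Measure Ω) : Prop :=
  μ {ω | X ω = 1} = 1 / 2 ∧ μ {ω | X ω = -1} = 1 / 2

variable {μ : Measure Ω} {X : Ω → ℝ}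

lemma Measurable.measurableSet_eq_const (hX : Measurable X) (c : ℝ) :
    MeasurableSet {ω | X ω = c} :=
  hX (measurableSet_singleton c)

namespace IsRademacher

variable [IsProbabilityMeasure μ]

lemma ae_eq_one_or_eq_neg_one (hX : Measurable X) (h : IsRademacher X μ) :
    ∀ᵐ ω ∂μ, X ω = 1 ∨ X ω = -1 := by
  have hdisj : Disjoint {ω | X ω = 1} {ω | X ω = -1} :=
    Set.disjoint_left.2 fun ω (h₁ : X ω = 1) (h₂ : X ω = -1) ↦ by linarith
  have hunion : μ ({ω | X ω = 1} ∪ {ω | X ω = -1}) = μ Set.univ := by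
    rw [measure_union hdisj (hX.measurableSet_eq_const _), h.1, h.2, ENNReal.add_halves,
      measure_univ]
  exact (ae_iff_measure_eq ((hX.measurableSet_eq_const 1).union
    (hX.measurableSet_eq_const (-1))).nullMeasurableSet).2 hunion

lemma comp_ae_eq_indicator (hX : Measurable X) (h : IsRademacher X μ) (g : ℝ → ℝ) :
    (fun ω ↦ g (X ω)) =ᵐ[μ] fun ω ↦
      {ω | X ω = 1}.indicator (fun _ ↦ g 1) ω + {ω | X ω = -1}.indicator (fun _ ↦ g (-1)) ω := by
  filter_upwards [h.ae_eq_one_or_eq_neg_one hX] with ω hω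
  rcases hω with hω | hω <;> norm_num [Set.indicator, hω]

lemma integrable_comp (hX : Measurable X) (h : IsRademacher X μ) (g : ℝ → ℝ) :
    Integrable (fun ω ↦ g (X ω)) μ :=
  (((integrable_const _).indicator (hX.measurableSet_eq_const 1)).add
    ((integrable_const _).indicator (hX.measurableSet_eq_const (-1)))).congr
    (h.comp_ae_eq_indicator hX g).symm

lemma integral_comp (hX : Measurable X) (h : IsRademacher X μ) (g : ℝ → ℝ) :
    ∫ ω, g (X ω) ∂μ = (g 1 + g (-1)) / 2 := by
  rw [integral_congr_ae (h.comp_ae_eq_indicator hX g),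
    integral_add ((integrable_const _).indicator (hX.measurableSet_eq_const 1))
      ((integrable_const _).indicator (hX.measurableSet_eq_const (-1))),
    integral_indicator_const _ (hX.measurableSet_eq_const 1),
    integral_indicator_const _ (hX.measurableSet_eq_const (-1)),
    measureReal_def, measureReal_def, h.1, h.2]
  simp only [ENNReal.toReal_div, ENNReal.toReal_one, ENNReal.toReal_ofNat, smul_eq_mul]
  ring

lemma mgf_eq_cosh (hX : Measurable X) (h : IsRademacher X μ) (t : ℝ) : mgf X μ t = cosh t := by
  rw [mgf, h.integral_comp hX (fun x ↦ exp (t * x)), cosh_eq]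
  ring_nf

lemma hasSubgaussianMGF (hX : Measurable X) (h : IsRademacher X μ) : HasSubgaussianMGF X 1 μ where
  integrable_exp_mul t := h.integrable_comp hX (fun x ↦ exp (t * x))
  mgf_le t := by
    simpa [h.mgf_eq_cosh hX t] using cosh_le_exp_half_sq t

lemma hasSubgaussianMGF_const_mul (hX : Measurable X) (h : IsRademacher X μ) (a : ℝ) :
    HasSubgaussianMGF (fun ω ↦ a * X ω) (‖a‖₊ ^ 2) μ := by
  convert (h.hasSubgaussianMGF hX).const_mul a using 1
  exact NNReal.eq ((NNReal.coe_mul _ _).trans (by simp; rfl)).symm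

end IsRademacher

end

lemma measureReal_sum_mul_rademacher_ge_le {Ω : Type*} [MeasurableSpace Ω] {μ : Measure Ω}
    [IsProbabilityMeasure μ] {ι : Type*} [Fintype ι] {X : ι → Ω → ℝ}
    (hX : ∀ i, Measurable (X i)) (hindep : iIndepFun X μ) (hR : ∀ i, IsRademacher (X i) μ)
    (a : ι → ℝ) {ε : ℝ} (hε : 0 ≤ ε) :
    μ.real {ω | ε ≤ ∑ i, a i * X i ω} ≤ exp (-ε ^ 2 / (2 * ∑ i, a i ^ 2)) := by
  have hindep' : iIndepFun (fun i ω ↦ a i * X i ω) μ :=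
    hindep.comp (fun i x ↦ a i * x) fun i ↦ measurable_const_mul (a i)
  simpa [NNReal.coe_sum] using HasSubgaussianMGF.measure_sum_ge_le_of_iIndepFun hindep'
    (s := Finset.univ) (fun i _ ↦ (hR i).hasSubgaussianMGF_const_mul (hX i) (a i)) hε

theorem rademacher_correlated_pair_tail
    {Ω : Type*} [MeasurableSpace Ω] (μ : Measure Ω) [IsProbabilityMeasure μ]
    (N₀ Nh : ℕ) (hN₀ : 0 < N₀)
    (f : (Fin N₀ ⊕ (Fin Nh ⊕ Fin Nh)) → Ω → ℝ)
    (hmeas : ∀ i, Measurable (f i))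
    (hindep : iIndepFun f μ)
    (hrad : ∀ i, μ {ω | f i ω = 1} = 1 / 2 ∧ μ {ω | f i ω = -1} = 1 / 2)
    (β : ℝ) (hβ : 0 ≤ β) :
    (μ {ω | β ≤ (∑ j, f (Sum.inl j) ω) + ∑ j, f (Sum.inr (Sum.inl j)) ω ∧
            β ≤ (∑ j, f (Sum.inl j) ω) + ∑ j, f (Sum.inr (Sum.inr j)) ω}).toReal
      ≤ 3 * ((N₀ : ℝ) + Nh) *
          Real.exp (-(β / Real.sqrt ((N₀ : ℝ) + Nh)) ^ 2 /
            (1 + (N₀ : ℝ) / ((Nh : ℝ) + N₀))) := by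
  set a : Fin N₀ ⊕ (Fin Nh ⊕ Fin Nh) → ℝ := Sum.elim (fun _ ↦ 2) (fun _ ↦ 1)
  have hsubset : {ω | β ≤ (∑ j, f (Sum.inl j) ω) + ∑ j, f (Sum.inr (Sum.inl j)) ω ∧
      β ≤ (∑ j, f (Sum.inl j) ω) + ∑ j, f (Sum.inr (Sum.inr j)) ω}
      ⊆ {ω | 2 * β ≤ ∑ i, a i * f i ω} := by
    rintro ω ⟨h₁, h₂⟩
    simp only [Set.mem_ofPred_eq, Fintype.sum_sum_type, a, Sum.elim_inl, Sum.elim_inr, one_mul,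
      ← Finset.mul_sum]
    linarith
  have hweights : ∑ i, a i ^ 2 = 4 * N₀ + 2 * Nh := by
    simp only [a, Fintype.sum_sum_type, Sum.elim_inl, Sum.elim_inr, Finset.sum_const,
      Finset.card_univ, Fintype.card_sum, Fintype.card_fin, Nat.cast_add, nsmul_eq_mul, one_pow,
      mul_one]
    ring
  have hexponent : -(β / √((N₀ : ℝ) + Nh)) ^ 2 / (1 + (N₀ : ℝ) / ((Nh : ℝ) + N₀))
      = -(2 * β) ^ 2 / (2 * (4 * N₀ + 2 * Nh)) := by
    have hN₀' : (0 : ℝ) < N₀ := by exact_mod_cast hN₀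
    rw [div_pow, sq_sqrt (by positivity)]
    field_simp
    ring
  have hfactor : (1 : ℝ) ≤ 3 * ((N₀ : ℝ) + Nh) := by
    have : (1 : ℝ) ≤ N₀ := by exact_mod_cast hN₀
    linarith [(Nat.cast_nonneg Nh : (0 : ℝ) ≤ Nh)]
  calc μ.real _ ≤ μ.real {ω | 2 * β ≤ ∑ i, a i * f i ω} := measureReal_mono hsubset
    _ ≤ exp (-(2 * β) ^ 2 / (2 * ∑ i, a i ^ 2)) :=
      measureReal_sum_mul_rademacher_ge_le hmeas hindep hrad a (by positivity)
    _ ≤ _ := by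
      rw [hweights, hexponent]
      exact le_mul_of_one_le_left (exp_pos _).le hfactor
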